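/- arXiv:2401.06353 — 5 statements merged into one kernel-verified Lean document; each statement's English description precedes it below -/
import Mathlib

section
/- The additive monoid M₀ generated by the set {1/p : p prime} inside ℚ is atomic, its set of atoms is exactly {1/p : p prime}, and M₀ has no prime elements and no strong atoms. -/
/-- An element `x` is a unit in the additive submonoid `M` if both `x` and `-x` lie in `M`. -/
def AddIsUnitIn {G : Type*} [AddCommGroup G] (M : AddSubmonoid G) (x : G) : Prop :=
  x ∈ M ∧ -x ∈ M

/-- `a` is an atom of `M`: a non-unit element of `M` that is not a sum of two non-units of `M`. -/
def AddIsAtomIn {G : Type*} [AddCommGroup G] (M : AddSubmonoid G) (a : G) : Prop :=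
  a ∈ M ∧ ¬ AddIsUnitIn M a ∧
    ∀ b c : G, b ∈ M → c ∈ M → a = b + c → AddIsUnitIn M b ∨ AddIsUnitIn M c

/-- `M` is atomic: every non-unit element of `M` is a finite sum of atoms of `M`. -/
def AddIsAtomicIn {G : Type*} [AddCommGroup G] (M : AddSubmonoid G) : Prop :=
  ∀ x ∈ M, ¬ AddIsUnitIn M x →
    ∃ s : Multiset G, (∀ a ∈ s, AddIsAtomIn M a) ∧ s.sum = x

/-- `a` is a strong atom of `M`: an atom all of whose multiples `n • a` factor uniquely
into atoms of `M` (namely as `n` copies of `a`). -/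
def AddIsStrongAtomIn {G : Type*} [AddCommGroup G] (M : AddSubmonoid G) (a : G) : Prop :=
  AddIsAtomIn M a ∧ ∀ n : ℕ, 0 < n → ∀ s : Multiset G,
    (∀ b ∈ s, AddIsAtomIn M b) → s.sum = n • a → s = Multiset.replicate n a

/-- `p` is a prime element of `M`: a non-unit of `M` such that whenever `p` divides
`b + c` in `M`, it divides `b` or `c` in `M`. -/
def AddIsPrimeIn {G : Type*} [AddCommGroup G] (M : AddSubmonoid G) (p : G) : Prop :=
  p ∈ M ∧ ¬ AddIsUnitIn M p ∧
    ∀ b c : G, b ∈ M → c ∈ M → (∃ d ∈ M, b + c = p + d) →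
      (∃ d ∈ M, b = p + d) ∨ (∃ d ∈ M, c = p + d)

/-!
A sum of reciprocals of primes different from `p` has denominator prime to `p`, while a sum in
which `1/p` occurs is at least `1/p`; so `1/p` cannot split into two nonzero elements, and the
atoms are exactly the generators. An element `x = ∑ 1/qᵢ` divides the integer `k = ∑ 1`, since
`1 - 1/q = (q - 1) • (1/q)`; hence it divides `(k r) • (1/r)` for every prime `r`. A prime element
would then divide `1/r`, which is absurd once `1/r < x`. Finally `p • (1/p) = 1 = q • (1/q)` gives
a second factorization of `p • (1/p)`.
-/

section General

variable {G : Type*} [AddCommGroup G] {M : AddSubmonoid G}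

theorem addIsUnitIn_zero : AddIsUnitIn M 0 :=
  ⟨zero_mem M, by simp⟩

theorem addIsUnitIn_iff_eq_zero [PartialOrder G] [IsOrderedAddMonoid G] (hM : ∀ x ∈ M, 0 ≤ x)
    {x : G} : AddIsUnitIn M x ↔ x = 0 :=
  ⟨fun h => le_antisymm (neg_nonneg.mp (hM _ h.2)) (hM _ h.1), fun h => h ▸ addIsUnitIn_zero⟩

theorem AddIsPrimeIn.dvd_of_dvd_nsmul {p a : G} (hp : AddIsPrimeIn M p) (ha : a ∈ M) :
    ∀ {n : ℕ}, (∃ d ∈ M, n • a = p + d) → ∃ d ∈ M, a = p + d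
  | 0, ⟨d, hd, h⟩ =>
    -- `0 = p + d` makes `p` a unit
    absurd ⟨hp.1, by rwa [neg_eq_of_add_eq_zero_right (zero_nsmul a ▸ h).symm]⟩ hp.2.1
  | n + 1, h =>
    (hp.2.2 a (n • a) ha (nsmul_mem ha n) (by rwa [← succ_nsmul'])).elim id
      (hp.dvd_of_dvd_nsmul ha)

theorem addIsAtomicIn_closure {S : Set G} (hS : ∀ a ∈ S, AddIsAtomIn (AddSubmonoid.closure S) a) :
    AddIsAtomicIn (AddSubmonoid.closure S) := fun _ hx _ =>
  let ⟨s, hs, hsum⟩ := AddSubmonoid.exists_multiset_of_mem_closure hx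
  ⟨s, fun a ha => hS a (hs a ha), hsum⟩

theorem mem_of_addIsAtomIn_closure {S : Set G} (h0 : (0 : G) ∉ S)
    (hunit : ∀ x, AddIsUnitIn (AddSubmonoid.closure S) x → x = 0) {a : G}
    (ha : AddIsAtomIn (AddSubmonoid.closure S) a) : a ∈ S := by
  obtain ⟨s, hs, rfl⟩ := AddSubmonoid.exists_multiset_of_mem_closure ha.1
  induction s using Multiset.induction_on with
  | empty => exact absurd addIsUnitIn_zero ha.2.1
  | cons b s _ =>
    simp only [Multiset.sum_cons] at ha ⊢
    have hb := hs b (Multiset.mem_cons_self b s)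
    have hsum : s.sum ∈ AddSubmonoid.closure S := multiset_sum_mem _ fun y hy =>
      AddSubmonoid.subset_closure (hs y (Multiset.mem_cons_of_mem hy))
    rcases ha.2.2 b s.sum (AddSubmonoid.subset_closure hb) hsum rfl with h | h
    · exact absurd (hunit b h ▸ hb) h0
    · rwa [hunit _ h, add_zero]

theorem not_addIsStrongAtomIn_of_nsmul_eq {a b : G} (hb : AddIsAtomIn M b) {m n : ℕ}
    (hm : 0 < m) (hnm : n ≠ m) (h : n • b = m • a) : ¬ AddIsStrongAtomIn M a := fun ha =>
  hnm <| by
    simpa using congrArg Multiset.card (ha.2 m hm (Multiset.replicate n b)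
      (fun c hc => Multiset.eq_of_mem_replicate hc ▸ hb) (by rw [Multiset.sum_replicate, h]))

end General

namespace Rat

def pIntegral {p : ℕ} (hp : p.Prime) : AddSubmonoid ℚ where
  carrier := {x | ¬ p ∣ x.den}
  zero_mem' := by simpa using hp.one_lt.ne'
  add_mem' {x y} hx hy h := (hp.dvd_mul.mp (h.trans (add_den_dvd x y))).elim hx hy

theorem mem_pIntegral {p : ℕ} (hp : p.Prime) {x : ℚ} : x ∈ pIntegral hp ↔ ¬ p ∣ x.den :=
  Iff.rfl

theorem inv_natCast_mem_pIntegral {p q : ℕ} (hp : p.Prime) (hq : q.Prime) (hqp : q ≠ p) :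
    (q : ℚ)⁻¹ ∈ pIntegral hp := by
  rw [mem_pIntegral, inv_natCast_den_of_pos hq.pos, Nat.prime_dvd_prime_iff_eq hp hq]
  exact hqp.symm

theorem inv_natCast_notMem_pIntegral {p : ℕ} (hp : p.Prime) : (p : ℚ)⁻¹ ∉ pIntegral hp := by
  rw [mem_pIntegral, inv_natCast_den_of_pos hp.pos, not_not]

end Rat

def primeReciprocals : Set ℚ := {q : ℚ | ∃ p : ℕ, Nat.Prime p ∧ q = (p : ℚ)⁻¹}

namespace PrimeReciprocals

local notation "M₀" => AddSubmonoid.closure primeReciprocals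

theorem inv_mem {p : ℕ} (hp : p.Prime) : (p : ℚ)⁻¹ ∈ M₀ :=
  AddSubmonoid.subset_closure ⟨p, hp, rfl⟩

theorem nonneg {x : ℚ} (hx : x ∈ M₀) : 0 ≤ x := by
  induction hx using AddSubmonoid.closure_induction with
  | mem _ h =>
    obtain ⟨p, -, rfl⟩ := h
    positivity
  | zero => exact le_rfl
  | add _ _ _ _ hx hy => exact add_nonneg hx hy

theorem addIsUnitIn_iff {x : ℚ} : AddIsUnitIn M₀ x ↔ x = 0 :=
  addIsUnitIn_iff_eq_zero fun _ => nonneg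

theorem mem_pIntegral_or_inv_le {p : ℕ} (hp : p.Prime) {x : ℚ} (hx : x ∈ M₀) :
    x ∈ Rat.pIntegral hp ∨ (p : ℚ)⁻¹ ≤ x := by
  obtain ⟨s, hs, rfl⟩ := AddSubmonoid.exists_multiset_of_mem_closure hx
  by_cases hmem : (p : ℚ)⁻¹ ∈ s
  · exact Or.inr (Multiset.single_le_sum (fun y hy => nonneg (AddSubmonoid.subset_closure (hs y hy)))
      _ hmem)
  · refine Or.inl (multiset_sum_mem _ fun y hy => ?_)
    obtain ⟨q, hq, rfl⟩ := hs y hy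
    exact Rat.inv_natCast_mem_pIntegral hp hq (by rintro rfl; exact hmem hy)

theorem inv_addIsAtomIn {p : ℕ} (hp : p.Prime) : AddIsAtomIn M₀ (p : ℚ)⁻¹ := by
  have hp0 : (0 : ℚ) < (p : ℚ)⁻¹ := inv_pos.mpr (Nat.cast_pos.mpr hp.pos)
  refine ⟨inv_mem hp, by rw [addIsUnitIn_iff]; exact hp0.ne', fun b c hb hc hbc => ?_⟩
  simp only [addIsUnitIn_iff]
  by_contra! hbc0
  have hbpos := (nonneg hb).lt_of_ne' hbc0.1
  have hcpos := (nonneg hc).lt_of_ne' hbc0.2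
  rcases mem_pIntegral_or_inv_le hp hb with hb' | hb'
  · rcases mem_pIntegral_or_inv_le hp hc with hc' | hc'
    · exact Rat.inv_natCast_notMem_pIntegral hp (hbc ▸ add_mem hb' hc')
    · linarith
  · linarith

theorem zero_notMem : (0 : ℚ) ∉ primeReciprocals := fun ⟨_, hp, h⟩ =>
  inv_ne_zero (Nat.cast_ne_zero.mpr hp.ne_zero) h.symm

theorem addIsAtomIn_iff {a : ℚ} : AddIsAtomIn M₀ a ↔ a ∈ primeReciprocals :=
  ⟨mem_of_addIsAtomIn_closure zero_notMem fun _ => addIsUnitIn_iff.mp,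
    fun ⟨_, hp, h⟩ => h ▸ inv_addIsAtomIn hp⟩

theorem exists_natCast_sub_mem {x : ℚ} (hx : x ∈ M₀) : ∃ k : ℕ, (k : ℚ) - x ∈ M₀ := by
  induction hx using AddSubmonoid.closure_induction with
  | mem _ h =>
    obtain ⟨p, hp, rfl⟩ := h
    have hp0 : (p : ℚ) ≠ 0 := Nat.cast_ne_zero.mpr hp.ne_zero
    refine ⟨1, ?_⟩
    have h1 : (1 : ℚ) - (p : ℚ)⁻¹ = (p - 1 : ℕ) • (p : ℚ)⁻¹ := by
      rw [nsmul_eq_mul, Nat.cast_sub hp.one_le]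
      field_simp
      push_cast
      ring
    exact h1 ▸ nsmul_mem (inv_mem hp) _
  | zero => exact ⟨0, by simp⟩
  | add _ _ _ _ hx hy =>
    obtain ⟨k, hk⟩ := hx
    obtain ⟨l, hl⟩ := hy
    exact ⟨k + l, by convert add_mem hk hl using 1; push_cast; ring⟩

theorem not_addIsPrimeIn (x : ℚ) : ¬ AddIsPrimeIn M₀ x := by
  intro hx
  have hx0 : 0 < x := (nonneg hx.1).lt_of_ne' fun h => hx.2.1 (addIsUnitIn_iff.mpr h)
  obtain ⟨k, hk⟩ := exists_natCast_sub_mem hx.1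
  obtain ⟨r, hxr, hr⟩ := Nat.exists_infinite_primes (⌈x⁻¹⌉₊ + 1)
  have hr0 : (r : ℚ) ≠ 0 := Nat.cast_ne_zero.mpr hr.ne_zero
  have hkr : (k * r) • (r : ℚ)⁻¹ = x + (k - x) := by
    rw [nsmul_eq_mul]
    push_cast
    field_simp
    ring
  obtain ⟨d, hd, hrd⟩ := hx.dvd_of_dvd_nsmul (inv_mem hr) ⟨_, hk, hkr⟩
  have hrx : (r : ℚ)⁻¹ < x := inv_lt_of_inv_lt₀ hx0 (Nat.lt_of_ceil_lt hxr)
  linarith [nonneg hd]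

theorem not_addIsStrongAtomIn (a : ℚ) : ¬ AddIsStrongAtomIn M₀ a := by
  intro ha
  obtain ⟨p, hp, rfl⟩ := addIsAtomIn_iff.mp ha.1
  obtain ⟨q, hpq, hq⟩ := Nat.exists_infinite_primes (p + 1)
  refine not_addIsStrongAtomIn_of_nsmul_eq (inv_addIsAtomIn hq) (n := q) hp.pos (by omega) ?_ ha
  simp [hp.ne_zero, hq.ne_zero]

end PrimeReciprocals

/-- The additive monoid `M₀ = ⟨1/p : p prime⟩ ⊆ ℚ` is atomic, its atoms are exactly the
reciprocals of primes, and it has no prime elements and no strong atoms. -/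
theorem reciprocals_of_primes_monoid (M : AddSubmonoid ℚ)
    (hM : M = AddSubmonoid.closure {q : ℚ | ∃ p : ℕ, Nat.Prime p ∧ q = (p : ℚ)⁻¹}) :
    AddIsAtomicIn M ∧
    {a : ℚ | AddIsAtomIn M a} = {q : ℚ | ∃ p : ℕ, Nat.Prime p ∧ q = (p : ℚ)⁻¹} ∧
    (∀ p : ℚ, ¬ AddIsPrimeIn M p) ∧
    (∀ a : ℚ, ¬ AddIsStrongAtomIn M a) := by
  subst hM
  exact ⟨addIsAtomicIn_closure fun _ => PrimeReciprocals.addIsAtomIn_iff.mpr,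
    Set.ext fun _ => PrimeReciprocals.addIsAtomIn_iff, PrimeReciprocals.not_addIsPrimeIn,
    PrimeReciprocals.not_addIsStrongAtomIn⟩
end

section
/- Let M be a reduced atomic additive submonoid of ℤ^d whose conic hull in ℚ^d is the conic hull of a finite set (polyhedral). Then M has only finitely many strong atoms. -/
/-- Componentwise coercion of an integer vector to a rational vector. -/
def coeZQ {d : ℕ} (v : Fin d → ℤ) : Fin d → ℚ := fun i => (v i : ℚ)

/-- The conic hull of a set `S ⊆ ℚ^d`: all finite nonnegative rational combinations
of elements of `S`. -/
def conicHullQ {d : ℕ} (S : Set (Fin d → ℚ)) : Set (Fin d → ℚ) :=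
  {y | ∃ (n : ℕ) (c : Fin n → ℚ) (v : Fin n → Fin d → ℚ),
    (∀ i, 0 ≤ c i ∧ v i ∈ S) ∧ y = ∑ i, c i • v i}

/-- A (convex) cone in `ℚ^d`: a nonempty set closed under nonnegative combinations. -/
def IsConvexConeQ {d : ℕ} (C : Set (Fin d → ℚ)) : Prop :=
  C.Nonempty ∧ ∀ x ∈ C, ∀ y ∈ C, ∀ a b : ℚ, 0 ≤ a → 0 ≤ b → a • x + b • y ∈ C

/-- `F` is a face of the cone `C`: a subcone such that whenever an open segment between
two points of `C` meets `F`, both endpoints lie in `F`. -/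
def IsFaceOfQ {d : ℕ} (C F : Set (Fin d → ℚ)) : Prop :=
  F ⊆ C ∧ IsConvexConeQ F ∧
    ∀ x ∈ C, ∀ y ∈ C, (∃ t : ℚ, 0 < t ∧ t < 1 ∧ t • x + (1 - t) • y ∈ F) → x ∈ F ∧ y ∈ F

/- Write a strong atom `a` as a conic combination `∑ cᵢ xᵢ` of the generators and pick a term
`cᵢ xᵢ ≠ 0`. Both `cᵢ xᵢ` and the remaining sum lie in the cone of `M`, so after clearing
denominators `K • a = u + v` with `u, v ∈ M` and `u` a multiple of `cᵢ xᵢ`. Factoring `u` and `v`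
into atoms factors `K • a`, which forces `u` to be a multiple of `a`: thus `a` lies on the ray of
the generator `xᵢ`. Two strong atoms on one ray have a common multiple, whose unique
factorization makes them equal, so the strong atoms inject into the finite set of generators. -/

section StrongAtoms

variable {G : Type*} [AddCommGroup G] {M : AddSubmonoid G}

theorem AddIsAtomicIn.exists_atom_factorization (hred : ∀ x ∈ M, -x ∈ M → x = 0)
    (hatomic : AddIsAtomicIn M) {u : G} (hu : u ∈ M) :
    ∃ s : Multiset G, (∀ b ∈ s, AddIsAtomIn M b) ∧ s.sum = u := by
  by_cases h0 : u = 0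
  · exact ⟨0, by simp, by simp [h0]⟩
  · exact hatomic u hu fun hunit => h0 (hred u hunit.1 hunit.2)

theorem AddIsStrongAtomIn.exists_eq_nsmul_of_add_eq_nsmul {a : G} (ha : AddIsStrongAtomIn M a)
    (hred : ∀ x ∈ M, -x ∈ M → x = 0) (hatomic : AddIsAtomicIn M) {K : ℕ} (hK : 0 < K)
    {u v : G} (hu : u ∈ M) (hv : v ∈ M) (h : u + v = K • a) : ∃ m : ℕ, u = m • a := by
  obtain ⟨s, hs, rfl⟩ := hatomic.exists_atom_factorization hred hu
  obtain ⟨t, ht, rfl⟩ := hatomic.exists_atom_factorization hred hv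
  have hst : s + t = Multiset.replicate K a :=
    ha.2 K hK _ (fun b hb => (Multiset.mem_add.mp hb).elim (hs b) (ht b))
      (by rw [Multiset.sum_add, h])
  obtain ⟨m, -, rfl⟩ := Multiset.le_replicate_iff.mp (hst ▸ Multiset.le_add_right s t)
  exact ⟨m, Multiset.sum_replicate m a⟩

theorem AddIsStrongAtomIn.eq_of_nsmul_eq_nsmul {a b : G} (ha : AddIsStrongAtomIn M a)
    (hb : AddIsAtomIn M b) {m n : ℕ} (hm : 0 < m) (hn : n ≠ 0) (h : n • b = m • a) : b = a := by
  have hrep : Multiset.replicate n b = Multiset.replicate m a :=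
    ha.2 m hm _ (fun c hc => Multiset.eq_of_mem_replicate hc ▸ hb)
      (by rw [Multiset.sum_replicate, h])
  exact Multiset.eq_of_mem_replicate (hrep ▸ Multiset.mem_replicate.mpr ⟨hn, rfl⟩)

end StrongAtoms

theorem exists_common_nat_denominator {ι : Type*} [Fintype ι] (c : ι → ℚ) (hc : ∀ i, 0 ≤ c i) :
    ∃ K : ℕ, 0 < K ∧ ∀ i, ∃ k : ℕ, (k : ℚ) = c i * K := by
  refine ⟨∏ i, (c i).den, Finset.prod_pos fun i _ => (c i).pos, fun i => ?_⟩
  obtain ⟨m, hm⟩ := Finset.dvd_prod_of_mem (fun i => (c i).den) (Finset.mem_univ i)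
  refine ⟨(c i).num.toNat * m, ?_⟩
  have hnum : (((c i).num.toNat : ℤ) : ℚ) = c i * (c i).den := by
    rw [Int.toNat_of_nonneg (Rat.num_nonneg.mpr (hc i)), Rat.mul_den_eq_num]
  rw [hm]
  push_cast at hnum ⊢
  rw [hnum, mul_assoc]

section Cones

variable {d : ℕ}

theorem coeZQ_injective : Function.Injective (coeZQ (d := d)) :=
  fun _ _ h => funext fun i => by simpa [coeZQ] using congrFun h i

@[simp] theorem coeZQ_zero : coeZQ (0 : Fin d → ℤ) = 0 := by
  funext i; simp [coeZQ]

@[simp] theorem coeZQ_add (x y : Fin d → ℤ) : coeZQ (x + y) = coeZQ x + coeZQ y := by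
  funext i; simp [coeZQ]

@[simp] theorem coeZQ_nsmul (n : ℕ) (x : Fin d → ℤ) : coeZQ (n • x) = (n : ℚ) • coeZQ x := by
  funext i; simp [coeZQ]

theorem coeZQ_sum {ι : Type*} (s : Finset ι) (f : ι → Fin d → ℤ) :
    coeZQ (∑ i ∈ s, f i) = ∑ i ∈ s, coeZQ (f i) := by
  funext i; simp [coeZQ]

theorem smul_mem_conicHullQ {S : Set (Fin d → ℚ)} {c : ℚ} (hc : 0 ≤ c) {x : Fin d → ℚ}
    (hx : x ∈ S) : c • x ∈ conicHullQ S :=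
  ⟨1, fun _ => c, fun _ => x, fun _ => ⟨hc, hx⟩, by simp⟩

theorem sum_sub_smul_mem_conicHullQ {S : Set (Fin d → ℚ)} {n : ℕ} {c : Fin n → ℚ}
    {v : Fin n → Fin d → ℚ} (hcv : ∀ i, 0 ≤ c i ∧ v i ∈ S) (i : Fin n) :
    ∑ j, c j • v j - c i • v i ∈ conicHullQ S := by
  refine ⟨n, Function.update c i 0, v, fun j => ⟨?_, (hcv j).2⟩, ?_⟩
  · rcases eq_or_ne j i with rfl | hj
    · simp
    · simpa [hj] using (hcv j).1
  · simp [Function.update_apply, ite_smul, Finset.sum_ite, Finset.filter_ne',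
      Finset.sum_erase_eq_sub]

theorem exists_pos_smul_eq_coeZQ_of_mem_conicHullQ {M : AddSubmonoid (Fin d → ℤ)}
    {y : Fin d → ℚ} (hy : y ∈ conicHullQ (coeZQ '' (M : Set (Fin d → ℤ)))) :
    ∃ N : ℕ, 0 < N ∧ ∃ u ∈ M, coeZQ u = (N : ℚ) • y := by
  obtain ⟨n, c, v, hcv, rfl⟩ := hy
  choose u hu huv using fun i => (hcv i).2
  obtain ⟨K, hK, hk⟩ := exists_common_nat_denominator c fun i => (hcv i).1
  choose k hk using hk
  refine ⟨K, hK, ∑ i, k i • u i, sum_mem fun i _ => nsmul_mem (hu i) (k i), ?_⟩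
  simp only [coeZQ_sum, coeZQ_nsmul, huv, hk, Finset.smul_sum, smul_smul, mul_comm]

end Cones

section Polyhedral

variable {d : ℕ} {M : AddSubmonoid (Fin d → ℤ)} {a : Fin d → ℤ}

theorem AddIsStrongAtomIn.exists_smul_eq_of_coeZQ_eq_add (ha : AddIsStrongAtomIn M a)
    (hred : ∀ x ∈ M, -x ∈ M → x = 0) (hatomic : AddIsAtomicIn M) {y z : Fin d → ℚ}
    (hy : y ∈ conicHullQ (coeZQ '' (M : Set (Fin d → ℤ))))
    (hz : z ∈ conicHullQ (coeZQ '' (M : Set (Fin d → ℤ)))) (h : coeZQ a = y + z) :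
    ∃ q : ℚ, 0 ≤ q ∧ y = q • coeZQ a := by
  obtain ⟨N, hN, u, hu, hNu⟩ := exists_pos_smul_eq_coeZQ_of_mem_conicHullQ hy
  obtain ⟨N', hN', v, hv, hN'v⟩ := exists_pos_smul_eq_coeZQ_of_mem_conicHullQ hz
  have hsum : N' • u + N • v = (N * N') • a := coeZQ_injective <| by
    simp only [coeZQ_add, coeZQ_nsmul, hNu, hN'v, h]
    push_cast
    module
  obtain ⟨m, hm⟩ := ha.exists_eq_nsmul_of_add_eq_nsmul hred hatomic (Nat.mul_pos hN hN')
    (nsmul_mem hu N') (nsmul_mem hv N) hsum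
  have hmy : ((N' * N : ℕ) : ℚ) • y = (m : ℚ) • coeZQ a := by
    rw [← coeZQ_nsmul, ← hm, coeZQ_nsmul, hNu, Nat.cast_mul, mul_smul]
  refine ⟨m / (N' * N : ℕ), by positivity, ?_⟩
  rw [div_eq_inv_mul, mul_smul, ← hmy, inv_smul_smul₀ (by positivity)]

theorem AddIsStrongAtomIn.eq_of_smul_coeZQ_eq_smul_coeZQ {b : Fin d → ℤ}
    (ha : AddIsStrongAtomIn M a) (hb : AddIsAtomIn M b) {p q : ℚ} (hp : 0 < p) (hq : 0 < q)
    (h : p • coeZQ a = q • coeZQ b) : b = a := by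
  obtain ⟨K, hK, hk⟩ :=
    exists_common_nat_denominator ![p, q] (by simp [Fin.forall_fin_two, hp.le, hq.le])
  obtain ⟨m, hm⟩ := hk 0
  obtain ⟨n, hn⟩ := hk 1
  simp only [Matrix.cons_val_zero, Matrix.cons_val_one] at hm hn
  have hm0 : 0 < m := by exact_mod_cast hm ▸ (by positivity : 0 < p * K)
  have hn0 : 0 < n := by exact_mod_cast hn ▸ (by positivity : 0 < q * K)
  refine ha.eq_of_nsmul_eq_nsmul hb hm0 hn0.ne' (coeZQ_injective ?_)
  rw [coeZQ_nsmul, coeZQ_nsmul, hm, hn, mul_comm p, mul_comm q, mul_smul, mul_smul, h]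

theorem AddIsStrongAtomIn.exists_mem_eq_smul_coeZQ (ha : AddIsStrongAtomIn M a)
    (hred : ∀ x ∈ M, -x ∈ M → x = 0) (hatomic : AddIsAtomicIn M) {X : Set (Fin d → ℚ)}
    (hX : conicHullQ (coeZQ '' (M : Set (Fin d → ℤ))) = conicHullQ X) :
    ∃ x ∈ X, ∃ q : ℚ, 0 < q ∧ x = q • coeZQ a := by
  have ha0 : coeZQ a ≠ 0 := fun h0 =>
    ha.1.2.1 (coeZQ_injective (h0.trans coeZQ_zero.symm) ▸ ⟨zero_mem M, by simp⟩)
  obtain ⟨n, c, v, hcv, hsum⟩ : coeZQ a ∈ conicHullQ X := by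
    simpa [← hX] using smul_mem_conicHullQ zero_le_one (Set.mem_image_of_mem coeZQ ha.1.1)
  obtain ⟨i, -, hi⟩ := Finset.exists_ne_zero_of_sum_ne_zero (hsum ▸ ha0)
  obtain ⟨q, hq, hcvq⟩ := ha.exists_smul_eq_of_coeZQ_eq_add hred hatomic
    (hX ▸ smul_mem_conicHullQ (hcv i).1 (hcv i).2) (hX ▸ sum_sub_smul_mem_conicHullQ hcv i)
    (by rw [hsum, add_sub_cancel])
  obtain ⟨hci, -⟩ := smul_ne_zero_iff.mp hi
  have hq0 : q ≠ 0 := by rintro rfl; exact hi (by simpa using hcvq)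
  refine ⟨v i, (hcv i).2, q / c i, div_pos (hq.lt_of_ne' hq0) ((hcv i).1.lt_of_ne' hci), ?_⟩
  rw [div_eq_inv_mul, mul_smul, ← hcvq, inv_smul_smul₀ hci]

end Polyhedral

/-- A reduced atomic submonoid of `ℤ^d` whose conic hull in `ℚ^d` is polyhedral
(the conic hull of a finite set) has only finitely many strong atoms. -/
theorem finitely_many_strong_atoms_of_polyhedral {d : ℕ}
    (M : AddSubmonoid (Fin d → ℤ))
    (hred : ∀ x ∈ M, -x ∈ M → x = 0)
    (hatomic : AddIsAtomicIn M)
    (hpoly : ∃ X : Finset (Fin d → ℚ),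
      conicHullQ (coeZQ '' (M : Set (Fin d → ℤ))) = conicHullQ (X : Set (Fin d → ℚ))) :
    {a : Fin d → ℤ | AddIsStrongAtomIn M a}.Finite := by
  obtain ⟨X, hX⟩ := hpoly
  choose! f hfX q hq hfq using fun a (ha : AddIsStrongAtomIn M a) =>
    ha.exists_mem_eq_smul_coeZQ hred hatomic hX
  refine Set.Finite.of_finite_image (f := f) (X.finite_toSet.subset ?_) fun a ha b hb hab => ?_
  · rintro _ ⟨a, ha, rfl⟩
    exact hfX a ha
  · exact (ha.eq_of_smul_coeZQ_eq_smul_coeZQ hb.1 (hq a ha) (hq b hb)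
      (by rw [← hfq a ha, ← hfq b hb, hab])).symm
end

section
/- The Hilbert monoid H = 4ℕ₀ + 1 is half-factorial: any two factorizations into atoms of the same element of H have the same length. -/
/-!
Give a prime `p` the weight `2` if `p ≡ 1 (mod 4)` and `1` otherwise, and extend this additively
along prime factorizations. Every atom of the Hilbert monoid has weight exactly `2`: an element
`a ≡ 1 (mod 4)` other than `1` always splits off, inside `H`, either a prime `p ≡ 1 (mod 4)` or a
product `q * r` of two primes `≡ 3 (mod 4)`, so an atom is one of these. Hence the length of any
factorization of `x` into atoms is half the weight of `x`.
-/

/-- `a` is an atom of the multiplicative submonoid `H ⊆ ℕ`: a non-unit element of `H`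
that is not a product of two non-units of `H` (the only unit of such an `H` is `1`). -/
def MulIsAtomIn (H : Submonoid ℕ) (a : ℕ) : Prop :=
  a ∈ H ∧ a ≠ 1 ∧ ∀ b c : ℕ, b ∈ H → c ∈ H → a = b * c → b = 1 ∨ c = 1

/-- Divisibility within the submonoid `H ⊆ ℕ`. -/
def MulDvdIn (H : Submonoid ℕ) (a b : ℕ) : Prop := ∃ c ∈ H, b = a * c

/-- `p` is a prime element of `H`: a non-unit such that whenever `p` divides a product
`b * c` in `H`, it divides `b` or `c` in `H`. -/
def MulIsPrimeIn (H : Submonoid ℕ) (p : ℕ) : Prop :=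
  p ∈ H ∧ p ≠ 1 ∧ ∀ b c : ℕ, b ∈ H → c ∈ H →
    MulDvdIn H p (b * c) → MulDvdIn H p b ∨ MulDvdIn H p c

/-- `a` is a strong atom of `H`: an atom all of whose powers `a ^ n` factor uniquely into
atoms of `H` (namely as `n` copies of `a`). -/
def MulIsStrongAtomIn (H : Submonoid ℕ) (a : ℕ) : Prop :=
  MulIsAtomIn H a ∧ ∀ n : ℕ, 0 < n → ∀ s : Multiset ℕ,
    (∀ b ∈ s, MulIsAtomIn H b) → s.prod = a ^ n → s = Multiset.replicate n a

def primeWeight (p : ℕ) : ℕ := if p % 4 = 1 then 2 else 1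

noncomputable def hilbertWeight (n : ℕ) : ℕ :=
  Finsupp.linearCombination ℕ primeWeight n.factorization

lemma hilbertWeight_one : hilbertWeight 1 = 0 := by
  simp [hilbertWeight]

lemma hilbertWeight_prime {p : ℕ} (hp : p.Prime) : hilbertWeight p = primeWeight p := by
  simp [hilbertWeight, hp.factorization, Finsupp.linearCombination_single]

lemma hilbertWeight_mul {a b : ℕ} (ha : a ≠ 0) (hb : b ≠ 0) :
    hilbertWeight (a * b) = hilbertWeight a + hilbertWeight b := by
  simp only [hilbertWeight, Nat.factorization_mul ha hb, map_add]

lemma hilbertWeight_multiset_prod {s : Multiset ℕ} (hs : ∀ a ∈ s, a ≠ 0) :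
    hilbertWeight s.prod = (s.map hilbertWeight).sum := by
  induction s using Multiset.induction_on with
  | empty => simp [hilbertWeight_one]
  | cons a s ih =>
    have hs' : ∀ b ∈ s, b ≠ 0 := fun b hb => hs b (Multiset.mem_cons_of_mem hb)
    have hprod : s.prod ≠ 0 := Multiset.prod_ne_zero fun h => hs' 0 h rfl
    rw [Multiset.prod_cons, hilbertWeight_mul (hs a (Multiset.mem_cons_self a s)) hprod, ih hs',
      Multiset.map_cons, Multiset.sum_cons]

lemma mod_two_eq_one_of_dvd_of_mod_four_eq_one {c a : ℕ} (hca : c ∣ a) (ha : a % 4 = 1) :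
    c % 2 = 1 := by
  have : ¬ 2 ∣ c := fun h2 => by have := h2.trans hca; omega
  omega

lemma mul_mod_four_eq_one_iff {a b : ℕ} (ha : a % 2 = 1) (hb : b % 2 = 1) :
    a * b % 4 = 1 ↔ a % 4 = b % 4 := by
  rw [Nat.mul_mod]
  rcases (by omega : a % 4 = 1 ∨ a % 4 = 3) with h | h <;>
    rcases (by omega : b % 4 = 1 ∨ b % 4 = 3) with h' | h' <;> simp [h, h']

lemma exists_hilbertWeight_eq_two_dvd {a : ℕ} (ha : a % 4 = 1) (ha1 : a ≠ 1) :
    ∃ d m, a = d * m ∧ d % 4 = 1 ∧ m % 4 = 1 ∧ hilbertWeight d = 2 := by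
  have hodd : ∀ c, c ∣ a → c % 2 = 1 := fun c hc => mod_two_eq_one_of_dvd_of_mod_four_eq_one hc ha
  obtain ⟨q, hq, m, hqm⟩ := Nat.exists_prime_and_dvd ha1
  have hq_odd := hodd q ⟨m, hqm⟩
  have hq_m : q % 4 = m % 4 :=
    (mul_mod_four_eq_one_iff hq_odd (hodd m ⟨q, hqm.trans (mul_comm _ _)⟩)).1 (hqm ▸ ha)
  by_cases hq1 : q % 4 = 1
  · exact ⟨q, m, hqm, hq1, by omega, by simp [hilbertWeight_prime hq, primeWeight, hq1]⟩
  obtain ⟨r, hr, n, hrn⟩ := Nat.exists_prime_and_dvd (show m ≠ 1 by omega)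
  have hr_odd := hodd r ⟨q * n, by rw [hqm, hrn]; ring⟩
  by_cases hr1 : r % 4 = 1
  · have hqn_odd := hodd (q * n) ⟨r, by rw [hqm, hrn]; ring⟩
    have ha' : a = r * (q * n) := by rw [hqm, hrn]; ring
    have hr_qn := (mul_mod_four_eq_one_iff hr_odd hqn_odd).1 (ha' ▸ ha)
    exact ⟨r, q * n, ha', hr1, by omega, by simp [hilbertWeight_prime hr, primeWeight, hr1]⟩
  · have hqr : q * r % 4 = 1 := (mul_mod_four_eq_one_iff hq_odd hr_odd).2 (by omega)
    have ha' : a = q * r * n := by rw [hqm, hrn]; ring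
    have hqr_n := (mul_mod_four_eq_one_iff (hodd (q * r) ⟨n, ha'⟩)
      (hodd n ⟨q * r, ha'.trans (mul_comm _ _)⟩)).1 (ha' ▸ ha)
    refine ⟨q * r, n, ha', hqr, by omega, ?_⟩
    rw [hilbertWeight_mul hq.ne_zero hr.ne_zero, hilbertWeight_prime hq, hilbertWeight_prime hr]
    simp [primeWeight, hq1, hr1]

lemma hilbertWeight_eq_two_of_mulIsAtomIn {H : Submonoid ℕ}
    (hH : (H : Set ℕ) = {n : ℕ | n % 4 = 1}) {a : ℕ} (ha : MulIsAtomIn H a) :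
    hilbertWeight a = 2 := by
  have mem (n : ℕ) : n ∈ H ↔ n % 4 = 1 := Set.ext_iff.1 hH n
  obtain ⟨haH, ha1, hsplit⟩ := ha
  obtain ⟨d, m, rfl, hd, hm, hwd⟩ := exists_hilbertWeight_eq_two_dvd ((mem _).1 haH) ha1
  rcases hsplit d m ((mem d).2 hd) ((mem m).2 hm) rfl with rfl | rfl
  · simp [hilbertWeight_one] at hwd
  · rwa [mul_one]

lemma hilbertWeight_prod_eq_two_mul_card {H : Submonoid ℕ}
    (hH : (H : Set ℕ) = {n : ℕ | n % 4 = 1}) {s : Multiset ℕ} (hs : ∀ a ∈ s, MulIsAtomIn H a) :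
    hilbertWeight s.prod = 2 * Multiset.card s := by
  have hs0 : ∀ a ∈ s, a ≠ 0 := fun a ha h0 => by
    have := Set.ext_iff.1 hH a |>.1 (hs a ha).1
    simp [h0] at this
  rw [hilbertWeight_multiset_prod hs0,
    Multiset.map_congr rfl fun a ha => hilbertWeight_eq_two_of_mulIsAtomIn hH (hs a ha),
    Multiset.map_const', Multiset.sum_replicate, smul_eq_mul, mul_comm]

/-- The Hilbert monoid `H = 4ℕ₀ + 1` is half-factorial: any two factorizations of the same
element of `H` into atoms of `H` have the same length. -/
theorem hilbert_monoid_half_factorial (H : Submonoid ℕ)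
    (hH : (H : Set ℕ) = {n : ℕ | n % 4 = 1}) :
    ∀ x ∈ H, ∀ s t : Multiset ℕ,
      (∀ a ∈ s, MulIsAtomIn H a) → (∀ a ∈ t, MulIsAtomIn H a) →
      s.prod = x → t.prod = x → Multiset.card s = Multiset.card t := by
  intro x _ s t hs ht hsx htx
  have h := hilbertWeight_prod_eq_two_mul_card hH hs
  rw [hsx, ← htx, hilbertWeight_prod_eq_two_mul_card hH ht] at h
  omega
end

section
/- Let M be a reduced Krull monoid with torsion class group. For each strong atom a of M, define λ_a : M → ℚ_{≥0} by λ_a(x) = x(a)/m(x), where x^{m(x)} = ∏_{a} a^{x(a)} is a decay decomposition (and λ_a(u) = 0 for units u). Then λ_a is a monoid homomorphism: λ_a(xy) = λ_a(x) + λ_a(y) for all x, y ∈ M. -/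
/-- `a` is an atom of the (cancellative commutative) monoid `M`. -/
def IsAtomM {M : Type*} [CancelCommMonoid M] (a : M) : Prop :=
  ¬ IsUnit a ∧ ∀ b c : M, a = b * c → IsUnit b ∨ IsUnit c

/-- `a` is a strong atom of `M`: an atom all of whose powers `a ^ n` factor uniquely into
atoms of `M` (namely as `n` copies of `a`). -/
def IsStrongAtomM {M : Type*} [CancelCommMonoid M] (a : M) : Prop :=
  IsAtomM a ∧ ∀ n : ℕ, 0 < n → ∀ s : Multiset M,
    (∀ b ∈ s, IsAtomM b) → s.prod = a ^ n → s = Multiset.replicate n a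

/-- `p` is a prime element of `M`. -/
def IsPrimeM {M : Type*} [CancelCommMonoid M] (p : M) : Prop :=
  ¬ IsUnit p ∧ ∀ b c : M, p ∣ b * c → p ∣ b ∨ p ∣ c

/-- `M` is reduced: its only unit is the identity. -/
def IsReducedM (M : Type*) [Monoid M] : Prop := ∀ u : M, IsUnit u → u = 1

/-- `τ : M → F`, with `F` the free commutative monoid on `ι` (written multiplicatively as
`Multiplicative (ι →₀ ℕ)`), is a divisor theory: (1) `τ b ∣ τ c` implies `b ∣ c`;
(2) every `d ∈ F` is a greatest common divisor of finitely many values of `τ`. -/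
def IsDivisorTheory {M ι : Type*} [CancelCommMonoid M]
    (τ : M →* Multiplicative (ι →₀ ℕ)) : Prop :=
  (∀ b c : M, τ b ∣ τ c → b ∣ c) ∧
  (∀ d : Multiplicative (ι →₀ ℕ), ∃ s : Finset M, s.Nonempty ∧
    (∀ b ∈ s, d ∣ τ b) ∧ ∀ e : Multiplicative (ι →₀ ℕ), (∀ b ∈ s, e ∣ τ b) → e ∣ d)

/-- The class group `F/τ(M)` of the divisor theory `τ` is a torsion group: every `d ∈ F`
has a power whose class is trivial, i.e. `d ^ n · τ b = τ c` for some `n ≥ 1` and `b, c ∈ M`. -/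
def HasTorsionClassGroup {M ι : Type*} [CancelCommMonoid M]
    (τ : M →* Multiplicative (ι →₀ ℕ)) : Prop :=
  ∀ d : Multiplicative (ι →₀ ℕ), ∃ n : ℕ, 0 < n ∧ ∃ b c : M, d ^ n * τ b = τ c

/-! Since the class group is torsion, some power `p ^ n` of each prime divisor is principal,
`τ e = p ^ n`. If `p` divides `τ a` for a strong atom `a`, then `e ^ (v_p (τ a))` divides `a ^ n`,
and every non-unit divisor of `a ^ n` is divisible by `a`; hence `τ a = p ^ k` is a prime power,
and distinct strong atoms lie over distinct primes. Reading `τ z ^ m = ∏ τ b ^ F b` at the prime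
of `a` then gives `F a / m = v_p (τ z) / k`, which is additive in `z`. -/

lemma Multiplicative.dvd_iff_toAdd_le {α : Type*} [AddCommMonoid α] [PartialOrder α]
    [CanonicallyOrderedAdd α] {d e : Multiplicative α} : d ∣ e ↔ d.toAdd ≤ e.toAdd := by
  rw [le_iff_exists_add]
  exact ⟨fun ⟨c, hc⟩ => ⟨c.toAdd, congrArg Multiplicative.toAdd hc⟩,
    fun ⟨c, hc⟩ => ⟨Multiplicative.ofAdd c, congrArg Multiplicative.ofAdd hc⟩⟩

def HasAtomFactorizations (M : Type*) [CancelCommMonoid M] : Prop :=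
  ∀ x : M, ∃ s : Multiset M, (∀ b ∈ s, IsAtomM b) ∧ s.prod = x

section DivisorTheory

variable {M ι : Type*} [CancelCommMonoid M] {τ : M →* Multiplicative (ι →₀ ℕ)}

lemma IsDivisorTheory.isUnit_of_map_eq_one (hdt : IsDivisorTheory τ) {a : M} (ha : τ a = 1) :
    IsUnit a :=
  isUnit_of_dvd_one (hdt.1 a 1 (by rw [ha, map_one]))

lemma IsDivisorTheory.hasAtomFactorizations (hdt : IsDivisorTheory τ) (hred : IsReducedM M) :
    HasAtomFactorizations M := by
  intro x
  induction hn : (τ x).toAdd.degree using Nat.strong_induction_on generalizing x with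
  | _ n ih =>
  by_cases hx1 : x = 1
  · exact ⟨0, by simp, by simp [hx1]⟩
  by_cases hx : IsAtomM x
  · exact ⟨{x}, by simpa using hx, by simp⟩
  obtain ⟨b, c, rfl, hb, hc⟩ : ∃ b c, x = b * c ∧ ¬IsUnit b ∧ ¬IsUnit c := by
    have hxu : ¬IsUnit x := fun h => hx1 (hred x h)
    simpa [IsAtomM, hxu] using hx
  have hdeg_pos {y : M} (hy : ¬IsUnit y) : 0 < (τ y).toAdd.degree := by
    rw [Nat.pos_iff_ne_zero, Ne, Finsupp.degree_eq_zero_iff]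
    exact fun h => hy (hdt.isUnit_of_map_eq_one (congrArg Multiplicative.ofAdd h))
  have hdeg : (τ (b * c)).toAdd.degree = (τ b).toAdd.degree + (τ c).toAdd.degree := by
    rw [map_mul, toAdd_mul, map_add]
  have hb_pos := hdeg_pos hb
  have hc_pos := hdeg_pos hc
  obtain ⟨sb, hsb, rfl⟩ := ih _ (by omega) b rfl
  obtain ⟨sc, hsc, rfl⟩ := ih _ (by omega) c rfl
  exact ⟨sb + sc, fun a ha => (Multiset.mem_add.1 ha).elim (hsb a) (hsc a), Multiset.prod_add _ _⟩

lemma HasTorsionClassGroup.exists_map_eq_pow (htor : HasTorsionClassGroup τ)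
    (hdt : IsDivisorTheory τ) (d : Multiplicative (ι →₀ ℕ)) :
    ∃ n, 0 < n ∧ ∃ e : M, τ e = d ^ n := by
  obtain ⟨n, hn, b, c, hbc⟩ := htor d
  obtain ⟨e, rfl⟩ := hdt.1 b c ⟨d ^ n, by rw [← hbc, mul_comm]⟩
  exact ⟨n, hn, e, mul_left_cancel (a := τ b) (by rw [← map_mul, ← hbc, mul_comm])⟩

end DivisorTheory

section StrongAtom

variable {M : Type*} [CancelCommMonoid M] {a : M}

lemma IsStrongAtomM.eq_of_dvd_pow (ha : IsStrongAtomM a) (hM : HasAtomFactorizations M) {b : M}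
    (hb : IsAtomM b) {n : ℕ} (hn : 0 < n) (hdvd : b ∣ a ^ n) : b = a := by
  obtain ⟨t, ht⟩ := hdvd
  obtain ⟨s, hs, rfl⟩ := hM t
  have hrep := ha.2 n hn (b ::ₘ s) (by simpa [hb] using hs) (by rw [Multiset.prod_cons, ht])
  exact Multiset.eq_of_mem_replicate (hrep ▸ Multiset.mem_cons_self b s)

lemma IsStrongAtomM.dvd_of_dvd_pow (ha : IsStrongAtomM a) (hM : HasAtomFactorizations M) {u : M}
    (hu : u ≠ 1) {n : ℕ} (hn : 0 < n) (hdvd : u ∣ a ^ n) : a ∣ u := by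
  obtain ⟨s, hs, rfl⟩ := hM u
  obtain ⟨b, hb⟩ :=
    Multiset.exists_mem_of_ne_zero (s := s) (by rintro rfl; exact hu Multiset.prod_zero)
  have hbu : b ∣ s.prod := Multiset.dvd_prod hb
  rwa [← ha.eq_of_dvd_pow hM (hs b hb) hn (hbu.trans hdvd)]

variable {ι : Type*} {τ : M →* Multiplicative (ι →₀ ℕ)}

lemma IsStrongAtomM.exists_map_eq_single (ha : IsStrongAtomM a) (hdt : IsDivisorTheory τ)
    (htor : HasTorsionClassGroup τ) (hred : IsReducedM M) :
    ∃ p k, 0 < k ∧ (τ a).toAdd = Finsupp.single p k := by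
  classical
  have hτa : (τ a).toAdd ≠ 0 := fun h =>
    ha.1.1 (hdt.isUnit_of_map_eq_one (congrArg Multiplicative.ofAdd h))
  obtain ⟨p, hp⟩ := Finsupp.support_nonempty_iff.2 hτa
  set k := (τ a).toAdd p
  have hk : 0 < k := Nat.pos_of_ne_zero (Finsupp.mem_support_iff.1 hp)
  obtain ⟨n, hn, e, he⟩ := htor.exists_map_eq_pow hdt (Multiplicative.ofAdd (Finsupp.single p 1))
  have hτu : (τ (e ^ k)).toAdd = Finsupp.single p (n * k) := by
    rw [map_pow, he, ← pow_mul, toAdd_pow, toAdd_ofAdd, Finsupp.smul_single, smul_eq_mul, mul_one]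
  have hu1 : e ^ k ≠ 1 := by
    intro h
    rw [h, map_one, toAdd_one, eq_comm, Finsupp.single_eq_zero] at hτu
    exact (Nat.mul_pos hn hk).ne' hτu
  have hu_dvd : e ^ k ∣ a ^ n := by
    refine hdt.1 _ _ (Multiplicative.dvd_iff_toAdd_le.2 ?_)
    rw [hτu, map_pow, toAdd_pow, Finsupp.single_le_iff, Finsupp.smul_apply, smul_eq_mul]
  have hle : (τ a).toAdd ≤ Finsupp.single p (n * k) := by
    rw [← hτu, ← Multiplicative.dvd_iff_toAdd_le]
    exact map_dvd τ (ha.dvd_of_dvd_pow (hdt.hasAtomFactorizations hred) hu1 hn hu_dvd)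
  exact ⟨p, k, hk, Finsupp.eq_single_iff.2
    ⟨(Finsupp.support_mono hle).trans Finsupp.support_single_subset, rfl⟩⟩

lemma IsStrongAtomM.map_apply_eq_zero (ha : IsStrongAtomM a) (hdt : IsDivisorTheory τ)
    (htor : HasTorsionClassGroup τ) (hred : IsReducedM M) {p : ι} {k : ℕ} (hk : 0 < k)
    (hap : (τ a).toAdd = Finsupp.single p k) {b : M} (hb : IsStrongAtomM b) (hba : b ≠ a) :
    (τ b).toAdd p = 0 := by
  classical
  obtain ⟨q, l, hl, hbq⟩ := hb.exists_map_eq_single hdt htor hred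
  rw [hbq, Finsupp.single_apply, if_neg]
  rintro rfl
  refine hba (ha.eq_of_dvd_pow (hdt.hasAtomFactorizations hred) hb.1 hl
    (hdt.1 _ _ (Multiplicative.dvd_iff_toAdd_le.2 ?_)))
  rw [hbq, map_pow, toAdd_pow, hap, Finsupp.smul_single, smul_eq_mul, Finsupp.single_le_iff,
    Finsupp.single_eq_same]
  exact Nat.le_mul_of_pos_right l hk

lemma IsStrongAtomM.div_eq_of_pow_eq_prod (ha : IsStrongAtomM a) (hdt : IsDivisorTheory τ)
    (htor : HasTorsionClassGroup τ) (hred : IsReducedM M) {p : ι} {k : ℕ} (hk : 0 < k)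
    (hap : (τ a).toAdd = Finsupp.single p k) {z : M} {m : ℕ} (hm : 0 < m) {F : M →₀ ℕ}
    (hF : ∀ b ∈ F.support, IsStrongAtomM b) (hz : z ^ m = F.prod fun b j => b ^ j) :
    (F a : ℚ) / m = ((τ z).toAdd p : ℚ) / k := by
  have hcount : (τ z).toAdd p * m = F a * k := by
    have hτz : m • (τ z).toAdd = ∑ b ∈ F.support, F b • (τ b).toAdd := by
      rw [← toAdd_pow, ← map_pow, hz, map_finsuppProd, Finsupp.prod, toAdd_prod]
      simp only [map_pow, toAdd_pow]
    have := congrArg (· p) hτz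
    simp only [Finsupp.smul_apply, smul_eq_mul, Finsupp.finsetSum_apply] at this
    rw [mul_comm, this, Finset.sum_eq_single a, hap, Finsupp.single_eq_same]
    · exact fun b hb hba => by rw [ha.map_apply_eq_zero hdt htor hred hk hap (hF b hb) hba, mul_zero]
    · exact fun haF => by rw [Finsupp.notMem_support_iff.1 haF, zero_mul]
  rw [div_eq_div_iff (by positivity) (by positivity)]
  exact_mod_cast hcount.symm

end StrongAtom

/-- The functions `λ_a(x) = x(a)/m(x)` given by the Decay Theorem are additive: if
`x ^ mx`, `y ^ my` and `(x*y) ^ mz` factor into strong atoms with exponent functions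
`f`, `g` and `h` respectively, then `h a / mz = f a / mx + g a / my` for every `a`. -/
theorem lambda_is_monoid_hom
    {M ι : Type*} [CancelCommMonoid M] (τ : M →* Multiplicative (ι →₀ ℕ))
    (hdt : IsDivisorTheory τ) (htor : HasTorsionClassGroup τ) (hred : IsReducedM M)
    (x y : M) (mx my mz : ℕ) (hmx : 0 < mx) (hmy : 0 < my) (hmz : 0 < mz)
    (f g h : M →₀ ℕ)
    (hf : ∀ a ∈ f.support, IsStrongAtomM a) (hg : ∀ a ∈ g.support, IsStrongAtomM a)
    (hh : ∀ a ∈ h.support, IsStrongAtomM a)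
    (hfx : x ^ mx = f.prod fun a k => a ^ k) (hgy : y ^ my = g.prod fun a k => a ^ k)
    (hhxy : (x * y) ^ mz = h.prod fun a k => a ^ k) :
    ∀ a : M, (h a : ℚ) / mz = (f a : ℚ) / mx + (g a : ℚ) / my := by
  intro a
  by_cases ha : IsStrongAtomM a
  · obtain ⟨p, k, hk, hap⟩ := ha.exists_map_eq_single hdt htor hred
    rw [ha.div_eq_of_pow_eq_prod hdt htor hred hk hap hmz hh hhxy,
      ha.div_eq_of_pow_eq_prod hdt htor hred hk hap hmx hf hfx,
      ha.div_eq_of_pow_eq_prod hdt htor hred hk hap hmy hg hgy,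
      map_mul, toAdd_mul, Finsupp.add_apply, Nat.cast_add, add_div]
  · have hzero {F : M →₀ ℕ} (hF : ∀ b ∈ F.support, IsStrongAtomM b) : F a = 0 :=
      Finsupp.notMem_support_iff.1 (mt (hF a) ha)
    simp [hzero hf, hzero hg, hzero hh]
end

section
/- Let M be a reduced Krull monoid with torsion class group, let σ : M → ℝ^× be a scale, and let A be a finite set of strong atoms of M. Then ∑_{x ∈ ⟨A⟩} 1/σ(x) = ∏_{a ∈ A} 1/(1 − 1/σ(a)), where the sum converges. -/
/-- The sum `∑_{x ∈ α} f x` of nonnegative terms converges to `l` in the sense of the paper: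
`l` is the least upper bound (hence supremum) of the finite partial sums. -/
def SumConvergesTo {α : Type*} (f : α → ℝ) (l : ℝ) : Prop :=
  IsLUB {y : ℝ | ∃ s : Finset α, y = ∑ x ∈ s, f x} l

/-- The product `∏_{x ∈ α} f x` of terms `≥ 1` converges to `l` in the sense of the paper:
`l` is the least upper bound (hence supremum) of the finite partial products. -/
def ProdConvergesTo {α : Type*} (f : α → ℝ) (l : ℝ) : Prop :=
  IsLUB {y : ℝ | ∃ s : Finset α, y = ∏ x ∈ s, f x} l

/-!
For a strong atom `a`, the divisor `τ a` is a prime power `p ^ m`: by torsion some `p ^ n` is a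
value `τ e`, and `τ e ∣ τ (a ^ n)` gives `e ∣ a ^ n`, so `e` is a power of `a` because the only
atomic factorization of `a ^ n` is `a ⋯ a`. Distinct strong atoms have distinct primes (if both
`τ a` and `τ b` are powers of `p`, then `a ^ k = b ^ m`), so the exponents of `∏ a ^ e a` can be
read off from `τ`, and `⟨A⟩ ≅ ℕ ^ A`. The sum over `⟨A⟩` is then a product of geometric series.
-/

open Finset

theorem HasSum.pi_prod_of_nonneg {ι : Type*} [Fintype ι] {f : ι → ℕ → ℝ} {a : ι → ℝ}
    (hf : ∀ i k, 0 ≤ f i k) (ha : ∀ i, HasSum (f i) (a i)) :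
    HasSum (fun e : ι → ℕ => ∏ i, f i (e i)) (∏ i, a i) := by
  classical
  have box_sum (N : ℕ) : ∑ e ∈ Fintype.piFinset fun _ => range N, ∏ i, f i (e i) =
      ∏ i, ∑ k ∈ range N, f i k :=
    (prod_univ_sum _ _).symm
  refine hasSum_of_isLUB_of_nonneg _ (fun e => prod_nonneg fun i _ => hf i _) ⟨?_, ?_⟩
  · rintro _ ⟨s, rfl⟩
    set N := (s.sup fun e => ∑ i, e i) + 1
    have hs : s ⊆ Fintype.piFinset fun _ => range N := by
      intro e he
      simp only [Fintype.mem_piFinset, mem_range, N, Nat.lt_succ_iff]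
      exact fun i => (single_le_sum (fun _ _ => Nat.zero_le _) (mem_univ i)).trans (le_sup he)
    calc ∑ e ∈ s, ∏ i, f i (e i)
        ≤ ∑ e ∈ Fintype.piFinset fun _ => range N, ∏ i, f i (e i) :=
          sum_le_sum_of_subset_of_nonneg hs fun e _ _ => prod_nonneg fun i _ => hf i _
      _ = _ := box_sum _
      _ ≤ ∏ i, a i := prod_le_prod (fun i _ => sum_nonneg fun k _ => hf i k)
          fun i _ => sum_le_hasSum _ (fun k _ => hf i k) (ha i)
  · intro u hu
    refine le_of_tendsto' (tendsto_finsetProd _ fun i _ => (ha i).tendsto_sum_nat) fun N => ?_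
    rw [← box_sum]
    exact hu ⟨_, rfl⟩

section DivisorTheory

variable {M ι : Type*} [CancelCommMonoid M] {τ : M →* Multiplicative (ι →₀ ℕ)}

theorem IsDivisorTheory.injective (hdt : IsDivisorTheory τ) (hred : IsReducedM M) :
    Function.Injective τ := by
  intro b c h
  obtain ⟨u, rfl⟩ := hdt.1 b c (h ▸ dvd_rfl)
  obtain ⟨v, hv⟩ := hdt.1 (b * u) b (h ▸ dvd_rfl)
  have huv : u * v = 1 := mul_left_cancel (a := b) (by rw [← mul_assoc, ← hv, mul_one])
  rw [hred u (.of_mul_eq_one v huv), mul_one]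

theorem IsDivisorTheory.degree_pos (hdt : IsDivisorTheory τ) (hred : IsReducedM M) {x : M}
    (hx : ¬ IsUnit x) : 0 < (Multiplicative.toAdd (τ x)).degree := by
  refine Nat.pos_of_ne_zero fun h => hx ?_
  rw [Finsupp.degree_eq_zero_iff, toAdd_eq_zero, ← map_one τ] at h
  exact hdt.injective hred h ▸ isUnit_one

theorem IsDivisorTheory.exists_atoms_prod_eq (hdt : IsDivisorTheory τ) (hred : IsReducedM M)
    (x : M) : ∃ s : Multiset M, (∀ b ∈ s, IsAtomM b) ∧ s.prod = x := by
  induction hn : (Multiplicative.toAdd (τ x)).degree using Nat.strong_induction_on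
    generalizing x with
  | _ n ih =>
  by_cases hu : IsUnit x
  · exact ⟨0, by simp, by rw [Multiset.prod_zero, hred x hu]⟩
  by_cases hat : IsAtomM x
  · exact ⟨{x}, by simpa using hat, Multiset.prod_singleton x⟩
  obtain ⟨b, c, rfl, hb, hc⟩ : ∃ b c, x = b * c ∧ ¬ IsUnit b ∧ ¬ IsUnit c := by
    simpa [IsAtomM, hu] using hat
  have hdeg : (Multiplicative.toAdd (τ b)).degree + (Multiplicative.toAdd (τ c)).degree = n := by
    rw [← hn, map_mul, toAdd_mul, map_add]
  have hb' := hdt.degree_pos hred hb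
  have hc' := hdt.degree_pos hred hc
  obtain ⟨s, hs, rfl⟩ := ih _ (by omega) b rfl
  obtain ⟨t, ht, rfl⟩ := ih _ (by omega) c rfl
  refine ⟨s + t, fun b hb => ?_, Multiset.prod_add s t⟩
  exact (Multiset.mem_add.1 hb).elim (hs b) (ht b)

theorem HasTorsionClassGroup.exists_image_eq_single (hdt : IsDivisorTheory τ)
    (htor : HasTorsionClassGroup τ) (p : ι) :
    ∃ n, 0 < n ∧ ∃ e : M, Multiplicative.toAdd (τ e) = Finsupp.single p n := by
  obtain ⟨n, hn, b, c, h⟩ := htor (.ofAdd (Finsupp.single p 1))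
  obtain ⟨e, rfl⟩ := hdt.1 b c ⟨_, h ▸ mul_comm _ _⟩
  refine ⟨n, hn, e, ?_⟩
  rw [map_mul, mul_comm, mul_left_cancel_iff] at h
  rw [← h, toAdd_pow, toAdd_ofAdd, Finsupp.smul_single, smul_eq_mul, mul_one]

end DivisorTheory

namespace IsStrongAtomM

variable {M : Type*} [CancelCommMonoid M] {a : M}

theorem exists_eq_pow_of_dvd_pow
    (hatomic : ∀ x : M, ∃ s : Multiset M, (∀ b ∈ s, IsAtomM b) ∧ s.prod = x)
    (ha : IsStrongAtomM a) {n : ℕ} (hn : 0 < n) {x : M} (hx : x ∣ a ^ n) : ∃ j, x = a ^ j := by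
  obtain ⟨y, hy⟩ := hx
  obtain ⟨s, hs, rfl⟩ := hatomic x
  obtain ⟨t, ht, rfl⟩ := hatomic y
  have hst := ha.2 n hn (s + t) (fun b hb => (Multiset.mem_add.1 hb).elim (hs b) (ht b))
    (by rw [Multiset.prod_add, hy])
  have hsa : ∀ b ∈ s, b = a := fun b hb =>
    Multiset.eq_of_mem_replicate (hst ▸ Multiset.mem_add.2 (Or.inl hb))
  exact ⟨Multiset.card s, by rw [← Multiset.prod_replicate, ← Multiset.eq_replicate_card.2 hsa]⟩

variable {ι : Type*} {τ : M →* Multiplicative (ι →₀ ℕ)}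

theorem exists_image_eq_single (hdt : IsDivisorTheory τ) (htor : HasTorsionClassGroup τ)
    (hred : IsReducedM M) (ha : IsStrongAtomM a) :
    ∃ p m, 0 < m ∧ Multiplicative.toAdd (τ a) = Finsupp.single p m := by
  set d := Multiplicative.toAdd (τ a)
  obtain ⟨p, hp⟩ := Finsupp.support_nonempty_iff.2
    (Finsupp.degree_eq_zero_iff d |>.not.1 (hdt.degree_pos hred ha.1.1).ne')
  have hdp : 0 < d p := Nat.pos_of_ne_zero (Finsupp.mem_support_iff.1 hp)
  obtain ⟨n, hn, e, he⟩ := htor.exists_image_eq_single hdt p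
  -- `τ e = pⁿ` divides `τ (aⁿ)` because `p` occurs in `τ a`
  have hle : Finsupp.single p n ≤ n • d :=
    Finsupp.single_le_iff.2 (by simpa using Nat.le_mul_of_pos_right n hdp)
  have hdvd : e ∣ a ^ n := hdt.1 _ _ ⟨.ofAdd (n • d - Finsupp.single p n), by
    rw [map_pow, ← ofAdd_toAdd (τ e), he, ← ofAdd_add, add_tsub_cancel_of_le hle, ofAdd_nsmul]
    rfl⟩
  obtain ⟨j, rfl⟩ := ha.exists_eq_pow_of_dvd_pow (hdt.exists_atoms_prod_eq hred) hn hdvd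
  rw [map_pow, toAdd_pow] at he
  have hj : j ≠ 0 := by
    rintro rfl
    rw [zero_smul, eq_comm, Finsupp.single_eq_zero] at he
    exact hn.ne' he
  refine ⟨p, d p, hdp, Finsupp.ext fun q => ?_⟩
  by_cases hq : q = p
  · rw [hq, Finsupp.single_eq_same]
  · have := congrArg (· q) he
    simp only [Finsupp.smul_apply, smul_eq_mul, Finsupp.single_eq_of_ne hq] at this
    rw [Finsupp.single_eq_of_ne hq]
    exact (mul_eq_zero.1 this).resolve_left hj

theorem eq_of_image_eq_single (hdt : IsDivisorTheory τ) (hred : IsReducedM M) {b : M}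
    (ha : IsStrongAtomM a) (hb : IsStrongAtomM b) {p : ι} {m k : ℕ} (hm : 0 < m) (hk : 0 < k)
    (hτa : Multiplicative.toAdd (τ a) = Finsupp.single p m)
    (hτb : Multiplicative.toAdd (τ b) = Finsupp.single p k) : a = b := by
  have hab : a ^ k = b ^ m := hdt.injective hred <| Multiplicative.toAdd.injective <| by
    rw [map_pow τ, map_pow τ, toAdd_pow, toAdd_pow, hτa, hτb, Finsupp.smul_single,
      Finsupp.smul_single, smul_eq_mul, smul_eq_mul, mul_comm]
  have hrepl := hb.2 m hm (Multiset.replicate k a)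
    (fun c hc => Multiset.eq_of_mem_replicate hc ▸ ha.1) (by rw [Multiset.prod_replicate, hab])
  exact Multiset.eq_of_mem_replicate (hrepl ▸ Multiset.mem_replicate.2 ⟨hk.ne', rfl⟩)

end IsStrongAtomM

section Closure

variable {M ι : Type*} [CancelCommMonoid M] {τ : M →* Multiplicative (ι →₀ ℕ)}

theorem injective_prod_pow_of_isStrongAtomM (hdt : IsDivisorTheory τ)
    (htor : HasTorsionClassGroup τ) (hred : IsReducedM M) {A : Finset M}
    (hA : ∀ a ∈ A, IsStrongAtomM a) :
    Function.Injective fun e : A → ℕ => ∏ a : A, (a : M) ^ e a := by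
  classical
  choose p m hm hτ using fun a : A => (hA a a.2).exists_image_eq_single hdt htor hred
  have hp : Function.Injective p := fun a b h => Subtype.ext <|
    (hA a a.2).eq_of_image_eq_single hdt hred (hA b b.2) (hm a) (hm b) (hτ a) (h ▸ hτ b)
  -- the exponent of `a` is read off from the multiplicity of the prime `p a`
  have hexp (e : A → ℕ) (a : A) :
      Multiplicative.toAdd (τ (∏ b : A, (b : M) ^ e b)) (p a) = e a * m a := by
    simp [map_prod, toAdd_prod, hτ, Finsupp.finsetSum_apply, Finsupp.single_apply, hp.eq_iff]
  intro e e' h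
  funext a
  refine Nat.eq_of_mul_eq_mul_right (hm a) ?_
  rw [← hexp e a, ← hexp e' a]
  exact congrArg (fun x => Multiplicative.toAdd (τ x) (p a)) h

noncomputable def closureEquivOfIsStrongAtomM (hdt : IsDivisorTheory τ)
    (htor : HasTorsionClassGroup τ) (hred : IsReducedM M) {A : Finset M}
    (hA : ∀ a ∈ A, IsStrongAtomM a) : (A → ℕ) ≃ Submonoid.closure (A : Set M) :=
  Equiv.ofBijective
    (fun e => ⟨∏ a : A, (a : M) ^ e a, Submonoid.mem_closure_finset'.2 ⟨e, rfl⟩⟩)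
    ⟨fun _ _ h => injective_prod_pow_of_isStrongAtomM hdt htor hred hA (congrArg Subtype.val h),
      fun ⟨_, hx⟩ => (Submonoid.mem_closure_finset'.1 hx).imp fun _ h => Subtype.ext h.symm⟩

end Closure

theorem sumConvergesTo_of_hasSum {α : Type*} {f : α → ℝ} {l : ℝ} (hf : ∀ x, 0 ≤ f x)
    (h : HasSum f l) : SumConvergesTo f l := by
  have hset : {y | ∃ s : Finset α, y = ∑ x ∈ s, f x} = Set.range fun s => ∑ x ∈ s, f x :=
    Set.ext fun _ => exists_congr fun _ => eq_comm
  rw [SumConvergesTo, hset]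
  exact isLUB_hasSum hf h

/-- Euler's product formula over a finite set of strong atoms: for a scale `σ` on a reduced
Krull monoid with torsion class group and a finite set `A` of strong atoms,
`∑_{x ∈ ⟨A⟩} 1/σ(x)` converges to `∏_{a ∈ A} 1/(1 - 1/σ(a))`. -/
theorem euler_product_finite_set_of_strong_atoms
    {M ι : Type*} [CancelCommMonoid M] (τ : M →* Multiplicative (ι →₀ ℕ))
    (hdt : IsDivisorTheory τ) (htor : HasTorsionClassGroup τ) (hred : IsReducedM M)
    (σ : M →* ℝˣ) (hσ : ∀ a : M, IsStrongAtomM a → 1 < ((σ a : ℝˣ) : ℝ))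
    (A : Finset M) (hA : ∀ a ∈ A, IsStrongAtomM a) :
    SumConvergesTo
      (fun x : ↥(Submonoid.closure (A : Set M)) => 1 / ((σ ↑x : ℝˣ) : ℝ))
      (∏ a ∈ A, 1 / (1 - 1 / ((σ a : ℝˣ) : ℝ))) := by
  have hσpos (x : M) (hx : x ∈ Submonoid.closure (A : Set M)) : 0 < ((σ x : ℝˣ) : ℝ) := by
    induction hx using Submonoid.closure_induction with
    | mem a ha => exact one_pos.trans (hσ a (hA a ha))
    | one => simp
    | mul x y _ _ hx hy => simpa using mul_pos hx hy
  have hq (a : A) : 0 ≤ 1 / ((σ a : ℝˣ) : ℝ) :=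
    (one_div_pos.2 (hσpos a (Submonoid.subset_closure a.2))).le
  have hsum : HasSum (fun e : A → ℕ => ∏ a : A, (1 / ((σ a : ℝˣ) : ℝ)) ^ e a)
      (∏ a : A, 1 / (1 - 1 / ((σ a : ℝˣ) : ℝ))) :=
    HasSum.pi_prod_of_nonneg (fun a _ => pow_nonneg (hq a) _) fun a => by
      rw [one_div (1 - _)]
      exact hasSum_geometric_of_lt_one (hq a)
        ((div_lt_one₀ (hσpos a (Submonoid.subset_closure a.2))).2 (hσ a (hA a a.2)))
  set E := closureEquivOfIsStrongAtomM hdt htor hred hA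
  have hcomp : (fun x : Submonoid.closure (A : Set M) => 1 / ((σ ↑x : ℝˣ) : ℝ)) ∘ E =
      fun e => ∏ a : A, (1 / ((σ a : ℝˣ) : ℝ)) ^ e a := by
    funext e
    simp [E, closureEquivOfIsStrongAtomM, map_prod]
  rw [← hcomp, E.hasSum_iff] at hsum
  rw [← Finset.prod_coe_sort A]
  exact sumConvergesTo_of_hasSum (fun x => (one_div_pos.2 (hσpos x x.2)).le) hsum
end
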